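/- The graph Φ = {(x,y,Θ(x,y)) : (x,y) ∈ reg(D)} is a smooth (embedded) submanifold of D × S¹ of dimension 2. -/

import Mathlib

-- angle determined by cos and sin
lemma angle_eq_of_cos_sin {θ ψ : Real.Angle} (hc : θ.cos = ψ.cos) (hs : θ.sin = ψ.sin) :
    θ = ψ := by
  induction θ using Real.Angle.induction_on
  induction ψ using Real.Angle.induction_on
  exact Real.Angle.cos_sin_inj hc hs

lemma maxAngle {a b : ℝ} (hab : ¬ (a = 0 ∧ b = 0)) {θ : Real.Angle}
    (hmax : ∀ φ : Real.Angle,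
      -Real.Angle.sin φ * a + Real.Angle.cos φ * b ≤
        -Real.Angle.sin θ * a + Real.Angle.cos θ * b) :
    θ.cos = b / Real.sqrt (a ^ 2 + b ^ 2) ∧ θ.sin = -a / Real.sqrt (a ^ 2 + b ^ 2) := by
  set r := Real.sqrt (a ^ 2 + b ^ 2) with hrdef
  have hr2 : r ^ 2 = a ^ 2 + b ^ 2 := Real.sq_sqrt (by positivity)
  have hrpos : 0 < r := by
    rw [hrdef, Real.sqrt_pos]
    rcases not_and_or.1 hab with h | h <;> positivity
  set z : ℂ := ⟨b / r, -a / r⟩ with hzdef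
  have hz2 : ‖z‖ ^ 2 = 1 := by
    rw [Complex.sq_norm, Complex.normSq_apply]
    show b / r * (b / r) + -a / r * (-a / r) = 1
    field_simp
    nlinarith
  have habs : ‖z‖ = 1 := by
    nlinarith [norm_nonneg z]
  have hz : z ≠ 0 := by
    intro h
    rw [h] at habs
    simp at habs
  set φ₀ : Real.Angle := (Complex.arg z : Real.Angle) with hφ₀
  have hc0 : φ₀.cos = b / r := by
    rw [hφ₀, Real.Angle.cos_coe, Complex.cos_arg hz, habs]
    simp [hzdef]
  have hs0 : φ₀.sin = -a / r := by
    rw [hφ₀, Real.Angle.sin_coe, Complex.sin_arg, habs]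
    simp [hzdef]
  have h0 := hmax φ₀
  rw [hc0, hs0] at h0
  have hcs' : θ.cos ^ 2 + θ.sin ^ 2 = 1 := Real.Angle.cos_sq_add_sin_sq θ
  obtain ⟨c, hc⟩ : ∃ c, θ.cos = c := ⟨_, rfl⟩
  obtain ⟨s, hs⟩ : ∃ s, θ.sin = s := ⟨_, rfl⟩
  rw [hc, hs] at hcs' h0 ⊢
  have hcs : c ^ 2 + s ^ 2 = 1 := hcs'
  have h0' : r ≤ -s * a + c * b := by
    have : -(-a / r) * a + b / r * b = r := by
      field_simp
      nlinarith
    linarith [this ▸ h0]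
  have hmul : r * r ≤ r * (-s * a + c * b) := mul_le_mul_of_nonneg_left h0' hrpos.le
  have hrr : r * r = a ^ 2 + b ^ 2 := by rw [← hr2]; ring
  have expand : (c * r - b) ^ 2 + (s * r + a) ^ 2 =
      (c ^ 2 + s ^ 2) * (r * r) + (a ^ 2 + b ^ 2) - 2 * (r * (-s * a + c * b)) := by ring
  have key : (c * r - b) ^ 2 + (s * r + a) ^ 2 ≤ 0 := by
    rw [expand, hcs, one_mul, hrr]; linarith
  have h1 : c * r = b := by
    have := sq_nonneg (c * r - b)
    have := sq_nonneg (s * r + a)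
    have : (c * r - b) ^ 2 = 0 := by linarith
    have := pow_eq_zero_iff (n := 2) (by norm_num) |>.mp this
    linarith
  have h2 : s * r = -a := by
    have := sq_nonneg (c * r - b)
    have := sq_nonneg (s * r + a)
    have : (s * r + a) ^ 2 = 0 := by linarith
    have := pow_eq_zero_iff (n := 2) (by norm_num) |>.mp this
    linarith
  constructor
  · rw [eq_div_iff hrpos.ne']; exact h1
  · rw [eq_div_iff hrpos.ne']; exact h2

/-- The graph `Φ = {(x,y,Θ(x,y)) : (x,y) ∈ reg(D)}` of the
orientation map is a smooth embedded 2-dimensional submanifold of `D × S¹`: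
the regular set is open in `ℝ²` (so it is a 2-dimensional manifold), the
graph map is a topological embedding onto `Φ`, and it is smooth in the sense
that `p ↦ (p, cos Θ(p), sin Θ(p))` is `C^∞` on the regular set. -/
theorem stmt4 (D : Set (ℝ × ℝ)) (hD : IsOpen D) (I : ℝ × ℝ → ℝ)
    (hI : ContDiffOn ℝ (⊤ : ℕ∞) I D)
    (reg : Set (ℝ × ℝ)) (hreg : reg = {p ∈ D | fderiv ℝ I p ≠ 0})
    (Θ : ℝ × ℝ → Real.Angle)
    (hΘ : ∀ p ∈ reg, ∀ φ : Real.Angle,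
      -Real.Angle.sin φ * fderiv ℝ I p (1, 0) +
          Real.Angle.cos φ * fderiv ℝ I p (0, 1) ≤
        -Real.Angle.sin (Θ p) * fderiv ℝ I p (1, 0) +
          Real.Angle.cos (Θ p) * fderiv ℝ I p (0, 1))
    (Φ : Set ((ℝ × ℝ) × Real.Angle)) (hΦ : Φ = (fun p => (p, Θ p)) '' reg) :
    IsOpen reg ∧
      Topology.IsEmbedding (fun p : reg => (((p : ℝ × ℝ), Θ p) : (ℝ × ℝ) × Real.Angle)) ∧
      Set.range (fun p : reg => (((p : ℝ × ℝ), Θ p) : (ℝ × ℝ) × Real.Angle)) = Φ ∧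
      ContDiffOn ℝ (⊤ : ℕ∞) (fun p : ℝ × ℝ => (p, (Θ p).cos, (Θ p).sin)) reg := by
  -- openness of reg
  have hsub : reg ⊆ D := by rw [hreg]; exact fun p hp => hp.1
  have hopen : IsOpen reg := by
    have hc : ContinuousOn (fderiv ℝ I) D :=
      hI.continuousOn_fderiv_of_isOpen hD (by simp)
    have : reg = D ∩ (fderiv ℝ I) ⁻¹' {0}ᶜ := by
      rw [hreg]; ext p; simp [Set.mem_setOf_eq]
    rw [this]
    exact hc.isOpen_inter_preimage hD isOpen_compl_singleton
  -- the partial derivative functions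
  set A : ℝ × ℝ → ℝ := fun p => fderiv ℝ I p (1, 0) with hAdef
  set B : ℝ × ℝ → ℝ := fun p => fderiv ℝ I p (0, 1) with hBdef
  have hfd : ContDiffOn ℝ (⊤ : ℕ∞) (fderiv ℝ I) D := hI.fderiv_of_isOpen hD (by simp)
  have hA : ContDiffOn ℝ (⊤ : ℕ∞) A D := hfd.clm_apply contDiffOn_const
  have hB : ContDiffOn ℝ (⊤ : ℕ∞) B D := hfd.clm_apply contDiffOn_const
  -- nonvanishing on reg
  have hne : ∀ p ∈ reg, ¬ (A p = 0 ∧ B p = 0) := by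
    intro p hp ⟨ha, hb⟩
    rw [hreg] at hp
    apply hp.2
    apply ContinuousLinearMap.ext
    intro v
    have hv : v = v.1 • ((1 : ℝ), (0 : ℝ)) + v.2 • ((0 : ℝ), (1 : ℝ)) := by
      simp [Prod.ext_iff]
    rw [hv, map_add, map_smul, map_smul]
    simp only [hAdef, hBdef] at ha hb
    rw [ha, hb]
    simp
  have hRpos : ∀ p ∈ reg, 0 < Real.sqrt (A p ^ 2 + B p ^ 2) := by
    intro p hp
    rw [Real.sqrt_pos]
    rcases not_and_or.1 (hne p hp) with h | h <;> positivity
  -- cos/sin formulas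
  have hcos : ∀ p ∈ reg, (Θ p).cos = B p / Real.sqrt (A p ^ 2 + B p ^ 2) :=
    fun p hp => (maxAngle (hne p hp) (hΘ p hp)).1
  have hsin : ∀ p ∈ reg, (Θ p).sin = -A p / Real.sqrt (A p ^ 2 + B p ^ 2) :=
    fun p hp => (maxAngle (hne p hp) (hΘ p hp)).2
  -- smoothness of the explicit formulas
  have hR : ContDiffOn ℝ (⊤ : ℕ∞) (fun p => Real.sqrt (A p ^ 2 + B p ^ 2)) reg := by
    intro p hp
    have hAp : ContDiffAt ℝ (⊤ : ℕ∞) A p := hA.contDiffAt (hD.mem_nhds (hsub hp))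
    have hBp : ContDiffAt ℝ (⊤ : ℕ∞) B p := hB.contDiffAt (hD.mem_nhds (hsub hp))
    have hne' : A p ^ 2 + B p ^ 2 ≠ 0 := by
      rcases not_and_or.1 (hne p hp) with h | h <;> positivity
    exact ((Real.contDiffAt_sqrt hne' |>.comp p
      ((hAp.pow 2).add (hBp.pow 2)))).contDiffWithinAt
  have hRne : ∀ p ∈ reg, Real.sqrt (A p ^ 2 + B p ^ 2) ≠ 0 :=
    fun p hp => (hRpos p hp).ne'
  have hCos : ContDiffOn ℝ (⊤ : ℕ∞) (fun p => B p / Real.sqrt (A p ^ 2 + B p ^ 2)) reg :=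
    (hB.mono hsub).div hR hRne
  have hSin : ContDiffOn ℝ (⊤ : ℕ∞) (fun p => -A p / Real.sqrt (A p ^ 2 + B p ^ 2)) reg :=
    ((hA.mono hsub).neg).div hR hRne
  have hsmooth : ContDiffOn ℝ (⊤ : ℕ∞) (fun p : ℝ × ℝ => (p, (Θ p).cos, (Θ p).sin)) reg := by
    apply ContDiffOn.congr (contDiffOn_id.prodMk (hCos.prodMk hSin))
    intro p hp
    simp only [id_eq]
    rw [hcos p hp, hsin p hp]
  refine ⟨hopen, ?_, ?_, hsmooth⟩
  · -- embedding
    haveI : Fact (0 < 2 * Real.pi) := ⟨by positivity⟩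
    haveI : CompactSpace Real.Angle := AddCircle.compactSpace _
    have hm : Topology.IsEmbedding (fun φ : Real.Angle => (φ.cos, φ.sin)) := by
      have hcont : Continuous (fun φ : Real.Angle => (φ.cos, φ.sin)) :=
        Real.Angle.continuous_cos.prodMk Real.Angle.continuous_sin
      have hinj : Function.Injective (fun φ : Real.Angle => (φ.cos, φ.sin)) := by
        intro θ ψ h
        exact angle_eq_of_cos_sin (congrArg Prod.fst h) (congrArg Prod.snd h)
      exact (hcont.isClosedEmbedding hinj).isEmbedding
    have hΘcont : Continuous (fun p : reg => Θ p) := by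
      rw [hm.continuous_iff]
      have : ContinuousOn (fun p => (B p / Real.sqrt (A p ^ 2 + B p ^ 2),
          -A p / Real.sqrt (A p ^ 2 + B p ^ 2))) reg :=
        (hCos.continuousOn).prodMk (hSin.continuousOn)
      refine (this.restrict).congr ?_
      intro p
      simp only [Set.restrict_apply, Function.comp_apply]
      exact Prod.ext (hcos p p.2).symm (hsin p p.2).symm
    refine Topology.IsEmbedding.of_comp ?_ continuous_fst ?_
    · exact continuous_subtype_val.prodMk hΘcont
    · exact Topology.IsEmbedding.subtypeVal
  · -- range
    rw [hΦ, Set.image_eq_range]
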